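/- arXiv:2008.13708 — 2 statements merged into one kernel-verified Lean document; each statement's English description precedes it below -/
import Mathlib

section
/- For X, Y ∈ B(H), the block diagonal operator T = diag(X, Y) on H ⊕ H satisfies ‖T‖_α ≤ max{ √(‖X‖_α² + α·w(X)²), √(‖Y‖_α² + α·w(Y)²) }. -/
/-!
For a unit vector `z = (x, y)` of `H ⊕₂ H` put `a = ‖x‖²`, `b = ‖y‖²`, so `a + b = 1`. Since
`⟨Tz, z⟩ = ⟨Xx, x⟩ + ⟨Yy, y⟩` and `‖Tz‖² = ‖Xx‖² + ‖Yy‖²`, the quantity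
`α |⟨Tz, z⟩|² + (1 - α) ‖Tz‖²` is at most the corresponding quantities for `X` at `x` and `Y` at `y`
plus the cross term `2α |⟨Xx, x⟩| |⟨Yy, y⟩|`. By homogeneity and `a, b ≤ 1` the first two are at
most `a ‖X‖_α²` and `b ‖Y‖_α²`, and `|⟨Xx, x⟩| ≤ a w(X)`, `|⟨Yy, y⟩| ≤ b w(Y)` bound the cross term
by `α (a w(X)² + b w(Y)²)`. The total is a convex combination of the two quantities under the max.
-/

open scoped Matrix

/-- The `α`-norm of a bounded operator `T`:
`‖T‖_α = sup {√(α|⟨Tx,x⟩|² + (1-α)‖Tx‖²) : ‖x‖ = 1}`. -/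
noncomputable def alphaNorm {H : Type*} [NormedAddCommGroup H] [InnerProductSpace ℂ H]
    (α : ℝ) (T : H →L[ℂ] H) : ℝ :=
  sSup {r : ℝ | ∃ x : H, ‖x‖ = 1 ∧
    r = Real.sqrt (α * ‖(inner ℂ (T x) x : ℂ)‖ ^ 2 + (1 - α) * ‖T x‖ ^ 2)}

/-- The numerical radius `w(T) = sup {|⟨Tx,x⟩| : ‖x‖ = 1}`. -/
noncomputable def numRadius {H : Type*} [NormedAddCommGroup H] [InnerProductSpace ℂ H]
    (T : H →L[ℂ] H) : ℝ :=
  sSup {r : ℝ | ∃ x : H, ‖x‖ = 1 ∧ r = ‖(inner ℂ (T x) x : ℂ)‖}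

variable {H : Type*} [NormedAddCommGroup H] [InnerProductSpace ℂ H]

/-- The canonical inclusion `H × H → H ⊕₂ H`. -/
noncomputable def pr (x y : H) : WithLp 2 (H × H) := (WithLp.equiv 2 (H × H)).symm (x, y)

open scoped InnerProductSpace

lemma exists_norm_eq_one_and_eq_smul {𝕜 E : Type*} [RCLike 𝕜] [NormedAddCommGroup E]
    [NormedSpace 𝕜 E] {x : E} (hx : x ≠ 0) : ∃ (c : 𝕜) (u : E), ‖u‖ = 1 ∧ x = c • u :=
  ⟨‖x‖, (‖x‖⁻¹ : 𝕜) • x, norm_smul_inv_norm hx,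
    (smul_inv_smul₀ (by simpa using hx) x).symm⟩

lemma two_mul_mul_le_of_le_mul {a b p q s t : ℝ} (ha : 0 ≤ a) (hb : 0 ≤ b) (hab : a + b = 1)
    (hp : 0 ≤ p) (hq : 0 ≤ q) (hps : p ≤ a * s) (hqt : q ≤ b * t) :
    2 * (p * q) ≤ a * s ^ 2 + b * t ^ 2 := by
  have hpq : p * q ≤ a * s * (b * t) := mul_le_mul hps hqt hq (hp.trans hps)
  have hsplit : a * s ^ 2 + b * t ^ 2 = (a * s) ^ 2 + (b * t) ^ 2 + a * b * (s ^ 2 + t ^ 2) := by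
    linear_combination (-(a * s ^ 2 + b * t ^ 2)) * hab
  nlinarith [sq_nonneg (a * s), sq_nonneg (b * t),
    mul_nonneg (mul_nonneg ha hb) (sq_nonneg (s - t))]

lemma mul_add_mul_le_max {a b u v : ℝ} (ha : 0 ≤ a) (hb : 0 ≤ b) (hab : a + b = 1) :
    a * u + b * v ≤ max u v := by
  calc a * u + b * v ≤ a * max u v + b * max u v := by gcongr <;> simp
    _ = max u v := by rw [← add_mul, hab, one_mul]

lemma norm_inner_apply_smul_self (T : H →L[ℂ] H) (c : ℂ) (x : H) :
    ‖⟪T (c • x), c • x⟫_ℂ‖ = ‖c‖ ^ 2 * ‖⟪T x, x⟫_ℂ‖ := by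
  simp only [map_smul, inner_smul_left, inner_smul_right, norm_mul, RCLike.norm_conj]
  ring

lemma norm_inner_apply_self_le_norm_apply (T : H →L[ℂ] H) {x : H} (hx : ‖x‖ = 1) :
    ‖⟪T x, x⟫_ℂ‖ ≤ ‖T x‖ := by
  simpa [hx] using norm_inner_le_norm (𝕜 := ℂ) (T x) x

lemma norm_apply_le_opNorm_of_norm_eq_one (T : H →L[ℂ] H) {x : H} (hx : ‖x‖ = 1) :
    ‖T x‖ ≤ ‖T‖ := by
  simpa using T.le_opNorm_of_le hx.le

lemma bddAbove_numRadius_set (T : H →L[ℂ] H) :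
    BddAbove {r : ℝ | ∃ x : H, ‖x‖ = 1 ∧ r = ‖⟪T x, x⟫_ℂ‖} := by
  refine ⟨‖T‖, ?_⟩
  rintro r ⟨x, hx, rfl⟩
  exact (norm_inner_apply_self_le_norm_apply T hx).trans
    (norm_apply_le_opNorm_of_norm_eq_one T hx)

lemma bddAbove_alphaNorm_set {α : ℝ} (hα : 0 ≤ α) (T : H →L[ℂ] H) :
    BddAbove {r : ℝ | ∃ x : H, ‖x‖ = 1 ∧
      r = Real.sqrt (α * ‖⟪T x, x⟫_ℂ‖ ^ 2 + (1 - α) * ‖T x‖ ^ 2)} := by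
  refine ⟨‖T‖, ?_⟩
  rintro r ⟨x, hx, rfl⟩
  have hinner : ‖⟪T x, x⟫_ℂ‖ ^ 2 ≤ ‖T x‖ ^ 2 := by
    gcongr; exact norm_inner_apply_self_le_norm_apply T hx
  calc Real.sqrt (α * ‖⟪T x, x⟫_ℂ‖ ^ 2 + (1 - α) * ‖T x‖ ^ 2)
      ≤ Real.sqrt (‖T x‖ ^ 2) := by gcongr; nlinarith
    _ = ‖T x‖ := Real.sqrt_sq (norm_nonneg _)
    _ ≤ ‖T‖ := norm_apply_le_opNorm_of_norm_eq_one T hx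

lemma norm_inner_apply_self_le_numRadius (T : H →L[ℂ] H) {x : H} (hx : ‖x‖ = 1) :
    ‖⟪T x, x⟫_ℂ‖ ≤ numRadius T :=
  le_csSup (bddAbove_numRadius_set T) ⟨x, hx, rfl⟩

lemma le_alphaNorm_sq {α : ℝ} (hα : 0 ≤ α) (T : H →L[ℂ] H) {x : H} (hx : ‖x‖ = 1) :
    α * ‖⟪T x, x⟫_ℂ‖ ^ 2 + (1 - α) * ‖T x‖ ^ 2 ≤ alphaNorm α T ^ 2 :=
  (Real.sqrt_le_iff.mp (le_csSup (bddAbove_alphaNorm_set hα T) ⟨x, hx, rfl⟩)).2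

lemma alphaNorm_le_sqrt {α c : ℝ} (T : H →L[ℂ] H)
    (h : ∀ x : H, ‖x‖ = 1 → α * ‖⟪T x, x⟫_ℂ‖ ^ 2 + (1 - α) * ‖T x‖ ^ 2 ≤ c) :
    alphaNorm α T ≤ Real.sqrt c :=
  Real.sSup_le (by rintro r ⟨x, hx, rfl⟩; exact Real.sqrt_le_sqrt (h x hx)) (Real.sqrt_nonneg c)

lemma norm_inner_apply_self_le_sq_mul_numRadius (T : H →L[ℂ] H) (x : H) :
    ‖⟪T x, x⟫_ℂ‖ ≤ ‖x‖ ^ 2 * numRadius T := by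
  rcases eq_or_ne x 0 with rfl | hx
  · simp
  obtain ⟨c, u, hu, rfl⟩ := exists_norm_eq_one_and_eq_smul (𝕜 := ℂ) hx
  rw [norm_inner_apply_smul_self, norm_smul, hu, mul_one]
  gcongr
  exact norm_inner_apply_self_le_numRadius T hu

lemma alpha_quadratic_le_sq_mul_alphaNorm_sq {α : ℝ} (hα : 0 ≤ α) (T : H →L[ℂ] H) {x : H}
    (hx : ‖x‖ ≤ 1) :
    α * ‖⟪T x, x⟫_ℂ‖ ^ 2 + (1 - α) * ‖T x‖ ^ 2 ≤ ‖x‖ ^ 2 * alphaNorm α T ^ 2 := by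
  rcases eq_or_ne x 0 with rfl | hx0
  · simp
  obtain ⟨c, u, hu, rfl⟩ := exists_norm_eq_one_and_eq_smul (𝕜 := ℂ) hx0
  rw [norm_smul, hu, mul_one] at hx ⊢
  rw [norm_inner_apply_smul_self, map_smul, norm_smul]
  have hu_le := le_alphaNorm_sq hα T hu
  have hc2 : ‖c‖ ^ 2 ≤ 1 := pow_le_one₀ (norm_nonneg c) hx
  -- the `α`-term scales by `‖c‖⁴ ≤ ‖c‖²`, the other one by `‖c‖²`
  nlinarith [mul_nonneg (mul_nonneg hα (sq_nonneg ‖⟪T u, u⟫_ℂ‖)) (sub_nonneg.mpr hc2),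
    sq_nonneg ‖c‖]

lemma alpha_quadratic_diag_le {α : ℝ} (hα : 0 ≤ α) (X Y : H →L[ℂ] H) {x y : H}
    (hxy : ‖x‖ ^ 2 + ‖y‖ ^ 2 = 1) :
    α * ‖⟪X x, x⟫_ℂ + ⟪Y y, y⟫_ℂ‖ ^ 2 + (1 - α) * (‖X x‖ ^ 2 + ‖Y y‖ ^ 2) ≤
      ‖x‖ ^ 2 * (alphaNorm α X ^ 2 + α * numRadius X ^ 2) +
        ‖y‖ ^ 2 * (alphaNorm α Y ^ 2 + α * numRadius Y ^ 2) := by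
  have hx : ‖x‖ ≤ 1 := by nlinarith [norm_nonneg x, sq_nonneg ‖y‖]
  have hy : ‖y‖ ≤ 1 := by nlinarith [norm_nonneg y, sq_nonneg ‖x‖]
  have hcross := two_mul_mul_le_of_le_mul (sq_nonneg ‖x‖) (sq_nonneg ‖y‖) hxy
    (norm_nonneg _) (norm_nonneg _) (norm_inner_apply_self_le_sq_mul_numRadius X x)
    (norm_inner_apply_self_le_sq_mul_numRadius Y y)
  have hX := alpha_quadratic_le_sq_mul_alphaNorm_sq hα X hx
  have hY := alpha_quadratic_le_sq_mul_alphaNorm_sq hα Y hy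
  calc α * ‖⟪X x, x⟫_ℂ + ⟪Y y, y⟫_ℂ‖ ^ 2 + (1 - α) * (‖X x‖ ^ 2 + ‖Y y‖ ^ 2)
      ≤ α * (‖⟪X x, x⟫_ℂ‖ + ‖⟪Y y, y⟫_ℂ‖) ^ 2 + (1 - α) * (‖X x‖ ^ 2 + ‖Y y‖ ^ 2) := by
        gcongr; exact norm_add_le _ _
    _ = (α * ‖⟪X x, x⟫_ℂ‖ ^ 2 + (1 - α) * ‖X x‖ ^ 2) +
          (α * ‖⟪Y y, y⟫_ℂ‖ ^ 2 + (1 - α) * ‖Y y‖ ^ 2) +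
          α * (2 * (‖⟪X x, x⟫_ℂ‖ * ‖⟪Y y, y⟫_ℂ‖)) := by ring
    _ ≤ ‖x‖ ^ 2 * alphaNorm α X ^ 2 + ‖y‖ ^ 2 * alphaNorm α Y ^ 2 +
          α * (‖x‖ ^ 2 * numRadius X ^ 2 + ‖y‖ ^ 2 * numRadius Y ^ 2) := by gcongr
    _ = _ := by ring

lemma inner_pr_pr (x y x' y' : H) : ⟪pr x y, pr x' y'⟫_ℂ = ⟪x, x'⟫_ℂ + ⟪y, y'⟫_ℂ := rfl

lemma norm_pr_sq {E : Type*} [NormedAddCommGroup E] (x y : E) :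
    ‖pr x y‖ ^ 2 = ‖x‖ ^ 2 + ‖y‖ ^ 2 :=
  WithLp.prod_norm_sq_eq_of_L2 _

theorem alphaNorm_diag_upper_general (α : ℝ) (hα0 : 0 ≤ α) (X Y : H →L[ℂ] H)
    (T : WithLp 2 (H × H) →L[ℂ] WithLp 2 (H × H))
    (hT : ∀ x y : H, T (pr x y) = pr (X x) (Y y)) :
    alphaNorm α T ≤ max (Real.sqrt (alphaNorm α X ^ 2 + α * numRadius X ^ 2))
      (Real.sqrt (alphaNorm α Y ^ 2 + α * numRadius Y ^ 2)) := by
  rw [← Real.sqrt_monotone.map_max]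
  refine alphaNorm_le_sqrt T fun z hz => ?_
  obtain ⟨x, y, rfl⟩ : ∃ x y : H, z = pr x y := ⟨z.fst, z.snd, rfl⟩
  have hxy : ‖x‖ ^ 2 + ‖y‖ ^ 2 = 1 := by rw [← norm_pr_sq, hz, one_pow]
  rw [hT, inner_pr_pr, norm_pr_sq]
  exact (alpha_quadratic_diag_le hα0 X Y hxy).trans
    (mul_add_mul_le_max (sq_nonneg _) (sq_nonneg _) hxy)

/-- `‖diag(X, Y)‖_α ≤ max{√(‖X‖_α² + α w(X)²), √(‖Y‖_α² + α w(Y)²)}`. -/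
theorem alphaNorm_diag_upper (α : ℝ) (hα0 : 0 ≤ α) (hα1 : α ≤ 1) (X Y : H →L[ℂ] H)
    (T : WithLp 2 (H × H) →L[ℂ] WithLp 2 (H × H))
    (hT : ∀ x y : H, T (pr x y) = pr (X x) (Y y)) :
    alphaNorm α T ≤ max (Real.sqrt (alphaNorm α X ^ 2 + α * numRadius X ^ 2))
      (Real.sqrt (alphaNorm α Y ^ 2 + α * numRadius Y ^ 2)) :=
  alphaNorm_diag_upper_general α hα0 X Y T hT
end

section
/- For X, Y ∈ B(H) and T = diag(X, Y) on H ⊕ H, ‖T‖_α ≤ √( max{‖X‖_α², ‖Y‖_α²} + α·w(X)·w(Y) ). -/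
open scoped Matrix

variable {H : Type*} [NormedAddCommGroup H] [InnerProductSpace ℂ H]

/-! For a unit vector `z = (x, y)` one has `⟨Tz, z⟩ = ⟨Xx, x⟩ + ⟨Yy, y⟩` and
`‖Tz‖² = ‖Xx‖² + ‖Yy‖²`. Bounding `|⟨Xx, x⟩ + ⟨Yy, y⟩|²` by `(|⟨Xx, x⟩| + |⟨Yy, y⟩|)²`, the
diagonal terms contribute at most `‖x‖² ‖X‖_α² + ‖y‖² ‖Y‖_α² ≤ max {‖X‖_α², ‖Y‖_α²}` and the cross
term at most `2α ‖x‖² ‖y‖² w(X) w(Y) ≤ α w(X) w(Y)`, because `‖x‖² + ‖y‖² = 1`. -/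

open scoped InnerProductSpace

section

variable {α : ℝ}

noncomputable def alphaForm (α : ℝ) (X : H →L[ℂ] H) (x : H) : ℝ :=
  α * ‖⟪X x, x⟫_ℂ‖ ^ 2 + (1 - α) * ‖X x‖ ^ 2

lemma norm_inner_map_smul_self (X : H →L[ℂ] H) (c : ℂ) (u : H) :
    ‖⟪X (c • u), c • u⟫_ℂ‖ = ‖c‖ ^ 2 * ‖⟪X u, u⟫_ℂ‖ := by
  rw [map_smul, inner_smul_left, inner_smul_right, norm_mul, norm_mul, RCLike.norm_conj]
  ring

lemma exists_norm_eq_one_smul {x : H} (hx : x ≠ 0) :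
    ∃ u : H, ‖u‖ = 1 ∧ x = (‖x‖ : ℂ) • u := by
  refine ⟨(‖x‖⁻¹ : ℂ) • x, norm_smul_inv_norm hx, ?_⟩
  rw [smul_smul, mul_inv_cancel₀ (by exact_mod_cast norm_ne_zero_iff.mpr hx), one_smul]

lemma norm_inner_le_norm_apply (X : H →L[ℂ] H) {u : H} (hu : ‖u‖ = 1) :
    ‖⟪X u, u⟫_ℂ‖ ≤ ‖X u‖ := by
  simpa [hu] using norm_inner_le_norm (X u) u

lemma numRadius_nonneg (X : H →L[ℂ] H) : 0 ≤ numRadius X :=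
  Real.sSup_nonneg (by rintro _ ⟨x, -, rfl⟩; exact norm_nonneg _)

lemma norm_inner_le_numRadius (X : H →L[ℂ] H) {u : H} (hu : ‖u‖ = 1) :
    ‖⟪X u, u⟫_ℂ‖ ≤ numRadius X := by
  have hbdd : BddAbove {r : ℝ | ∃ v : H, ‖v‖ = 1 ∧ r = ‖⟪X v, v⟫_ℂ‖} := by
    refine ⟨‖X‖, ?_⟩
    rintro _ ⟨v, hv, rfl⟩
    exact (norm_inner_le_norm_apply X hv).trans (X.unit_le_opNorm v hv.le)
  exact le_csSup hbdd ⟨u, hu, rfl⟩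

lemma norm_inner_le_sq_mul_numRadius (X : H →L[ℂ] H) (x : H) :
    ‖⟪X x, x⟫_ℂ‖ ≤ ‖x‖ ^ 2 * numRadius X := by
  rcases eq_or_ne x 0 with rfl | hx
  · simp
  obtain ⟨u, hu, hxu⟩ := exists_norm_eq_one_smul hx
  calc ‖⟪X x, x⟫_ℂ‖ = ‖x‖ ^ 2 * ‖⟪X u, u⟫_ℂ‖ := by
        conv_lhs => rw [hxu]
        rw [norm_inner_map_smul_self, Complex.norm_real, norm_norm]
    _ ≤ ‖x‖ ^ 2 * numRadius X := by gcongr; exact norm_inner_le_numRadius X hu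

lemma alphaForm_le_opNorm_sq (hα : 0 ≤ α) (X : H →L[ℂ] H) {u : H} (hu : ‖u‖ = 1) :
    alphaForm α X u ≤ ‖X‖ ^ 2 := by
  have hinner : ‖⟪X u, u⟫_ℂ‖ ^ 2 ≤ ‖X u‖ ^ 2 := by gcongr; exact norm_inner_le_norm_apply X hu
  have hXu : ‖X u‖ ^ 2 ≤ ‖X‖ ^ 2 := by gcongr; exact X.unit_le_opNorm u hu.le
  rw [alphaForm]
  nlinarith

lemma alphaForm_le_alphaNorm_sq (hα : 0 ≤ α) (X : H →L[ℂ] H) {u : H} (hu : ‖u‖ = 1) :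
    alphaForm α X u ≤ alphaNorm α X ^ 2 := by
  have hbdd : BddAbove {r : ℝ | ∃ v : H, ‖v‖ = 1 ∧ r = √(alphaForm α X v)} := by
    refine ⟨‖X‖, ?_⟩
    rintro _ ⟨v, hv, rfl⟩
    exact (Real.sqrt_le_left (norm_nonneg X)).2 (alphaForm_le_opNorm_sq hα X hv)
  exact (Real.sqrt_le_iff.1 (le_csSup hbdd ⟨u, hu, rfl⟩)).2

/-- The two terms of `alphaForm α X x` scale like `‖x‖⁴` and `‖x‖²`, so inside the unit ball the
bound `‖x‖² ‖X‖_α²` survives. -/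
lemma alphaForm_le_sq_mul_alphaNorm_sq (hα : 0 ≤ α) (X : H →L[ℂ] H) {x : H} (hx : ‖x‖ ≤ 1) :
    alphaForm α X x ≤ ‖x‖ ^ 2 * alphaNorm α X ^ 2 := by
  rcases eq_or_ne x 0 with rfl | hx0
  · simp [alphaForm]
  obtain ⟨u, hu, hxu⟩ := exists_norm_eq_one_smul hx0
  have hinner : ‖⟪X x, x⟫_ℂ‖ = ‖x‖ ^ 2 * ‖⟪X u, u⟫_ℂ‖ := by
    conv_lhs => rw [hxu]
    rw [norm_inner_map_smul_self, Complex.norm_real, norm_norm]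
  have hXx : ‖X x‖ = ‖x‖ * ‖X u‖ := by
    conv_lhs => rw [hxu]
    rw [map_smul, norm_smul, Complex.norm_real, norm_norm]
  have hx4 : ‖x‖ ^ 4 ≤ ‖x‖ ^ 2 := pow_le_pow_of_le_one (norm_nonneg x) hx (by norm_num)
  calc alphaForm α X x
      = ‖x‖ ^ 4 * (α * ‖⟪X u, u⟫_ℂ‖ ^ 2) + ‖x‖ ^ 2 * ((1 - α) * ‖X u‖ ^ 2) := by
        rw [alphaForm, hinner, hXx]; ring
    _ ≤ ‖x‖ ^ 2 * (α * ‖⟪X u, u⟫_ℂ‖ ^ 2) + ‖x‖ ^ 2 * ((1 - α) * ‖X u‖ ^ 2) := by gcongr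
    _ = ‖x‖ ^ 2 * alphaForm α X u := by rw [alphaForm]; ring
    _ ≤ ‖x‖ ^ 2 * alphaNorm α X ^ 2 := by gcongr; exact alphaForm_le_alphaNorm_sq hα X hu

lemma alphaForm_diag_le (hα : 0 ≤ α) (X Y : H →L[ℂ] H) {x y : H}
    (hxy : ‖x‖ ^ 2 + ‖y‖ ^ 2 = 1) :
    α * ‖⟪X x, x⟫_ℂ + ⟪Y y, y⟫_ℂ‖ ^ 2 + (1 - α) * (‖X x‖ ^ 2 + ‖Y y‖ ^ 2) ≤
      max (alphaNorm α X ^ 2) (alphaNorm α Y ^ 2) + α * numRadius X * numRadius Y := by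
  set M := max (alphaNorm α X ^ 2) (alphaNorm α Y ^ 2)
  have hx : ‖x‖ ≤ 1 := by nlinarith [norm_nonneg x, sq_nonneg ‖y‖]
  have hy : ‖y‖ ≤ 1 := by nlinarith [norm_nonneg y, sq_nonneg ‖x‖]
  have hwX := numRadius_nonneg X
  have hwY := numRadius_nonneg Y
  have hxy2 : 2 * (‖x‖ ^ 2 * ‖y‖ ^ 2) ≤ 1 := by nlinarith [sq_nonneg (‖x‖ ^ 2 - ‖y‖ ^ 2)]
  calc α * ‖⟪X x, x⟫_ℂ + ⟪Y y, y⟫_ℂ‖ ^ 2 + (1 - α) * (‖X x‖ ^ 2 + ‖Y y‖ ^ 2)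
      ≤ α * (‖⟪X x, x⟫_ℂ‖ + ‖⟪Y y, y⟫_ℂ‖) ^ 2 + (1 - α) * (‖X x‖ ^ 2 + ‖Y y‖ ^ 2) := by
        gcongr; exact norm_add_le _ _
    _ = alphaForm α X x + alphaForm α Y y + 2 * α * (‖⟪X x, x⟫_ℂ‖ * ‖⟪Y y, y⟫_ℂ‖) := by
        rw [alphaForm, alphaForm]; ring
    _ ≤ ‖x‖ ^ 2 * M + ‖y‖ ^ 2 * M
          + 2 * α * ((‖x‖ ^ 2 * numRadius X) * (‖y‖ ^ 2 * numRadius Y)) := by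
        gcongr
        · exact (alphaForm_le_sq_mul_alphaNorm_sq hα X hx).trans (by gcongr; exact le_max_left _ _)
        · exact (alphaForm_le_sq_mul_alphaNorm_sq hα Y hy).trans (by gcongr; exact le_max_right _ _)
        · exact norm_inner_le_sq_mul_numRadius X x
        · exact norm_inner_le_sq_mul_numRadius Y y
    _ = M + α * numRadius X * numRadius Y * (2 * (‖x‖ ^ 2 * ‖y‖ ^ 2)) := by
        linear_combination M * hxy
    _ ≤ M + α * numRadius X * numRadius Y := by
        gcongr M + ?_
        exact mul_le_of_le_one_right (by positivity) hxy2

end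

theorem alphaNorm_diag_mixed_general (α : ℝ) (hα0 : 0 ≤ α) (X Y : H →L[ℂ] H)
    (T : WithLp 2 (H × H) →L[ℂ] WithLp 2 (H × H))
    (hT : ∀ x y : H, T (pr x y) = pr (X x) (Y y)) :
    alphaNorm α T ≤
      Real.sqrt (max (alphaNorm α X ^ 2) (alphaNorm α Y ^ 2) + α * numRadius X * numRadius Y) := by
  refine Real.sSup_le ?_ (Real.sqrt_nonneg _)
  rintro _ ⟨z, hz, rfl⟩
  refine Real.sqrt_le_sqrt ?_
  have hTz : T z = pr (X z.fst) (Y z.snd) := hT _ _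
  have hinner : ⟪T z, z⟫_ℂ = ⟪X z.fst, z.fst⟫_ℂ + ⟪Y z.snd, z.snd⟫_ℂ := by
    rw [WithLp.prod_inner_apply, hTz]; rfl
  have hnorm : ‖T z‖ ^ 2 = ‖X z.fst‖ ^ 2 + ‖Y z.snd‖ ^ 2 := by
    rw [WithLp.prod_norm_sq_eq_of_L2, hTz]; rfl
  have hunit : ‖z.fst‖ ^ 2 + ‖z.snd‖ ^ 2 = 1 := by
    rw [← WithLp.prod_norm_sq_eq_of_L2, hz, one_pow]
  rw [hinner, hnorm]
  exact alphaForm_diag_le hα0 X Y hunit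

/-- `‖diag(X, Y)‖_α ≤ √(max{‖X‖_α², ‖Y‖_α²} + α w(X) w(Y))`. -/
theorem alphaNorm_diag_mixed (α : ℝ) (hα0 : 0 ≤ α) (hα1 : α ≤ 1) (X Y : H →L[ℂ] H)
    (T : WithLp 2 (H × H) →L[ℂ] WithLp 2 (H × H))
    (hT : ∀ x y : H, T (pr x y) = pr (X x) (Y y)) :
    alphaNorm α T ≤
      Real.sqrt (max (alphaNorm α X ^ 2) (alphaNorm α Y ^ 2) + α * numRadius X * numRadius Y) :=
  alphaNorm_diag_mixed_general α hα0 X Y T hT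
end
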